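/- arXiv:1112.4879 — 3 statements merged into one kernel-verified Lean document; each statement's English description precedes it below -/
import Mathlib

section
/- Let δ ∈ (0,1] and let n0, n1, n2, R̄0, R̄1, R̄2, R̄3 be nonnegative integers with n1 ≥ n0 ≥ n2 satisfying R̄0 + R̄1 + R̄2 + R̄3 ≤ n1 − 6 − log₂(6652/δ), R̄0 + R̄2 + R̄3 ≤ n0 − 6 − log₂(6652/δ), and R̄2 + R̄3 ≤ n2 − 6. Then there exists a set B ⊆ (1,2]⁴ with μ(B) ≤ δ such that for all (h11,h12,h21,h22) ∈ (1,2]⁴ ∖ B, writing g0 = h11·h12, g1 = h11·h22, g2 = h12·h21, the following holds: for all integers q0, q1, q2, q3 with |q0| ≤ 2^{R̄0}, |q1| ≤ 2^{R̄1}, |q2| ≤ 2^{R̄2}, |q3| ≤ 2^{R̄3}, and (q0,q1,q2) ≠ (0,0,0), one has |2^{n0−R̄0}·g0·q0 + g1·(2^{n1−R̄1}·q1 + q3) + 2^{n2−R̄2}·g2·q2| ≥ 32. -/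
open MeasureTheory

section helpers
open Set ENNReal


set_option maxHeartbeats 1000000 in
lemma core (a C m w : ℝ) (ha1 : 1 < a) (ha2 : a ≤ 2) (hm : 64 ≤ m) (hw : |w| ≤ m / 64) :
    volume {x : ℝ | x ∈ Set.Ioc (1:ℝ) 2 ∧ ∃ q : ℤ, q ≠ 0 ∧ |C + a * x * (m * q + w)| < 32}
      ≤ ENNReal.ofReal (1024 / m) := by
  classical
  have hm0 : (0:ℝ) < m := by linarith
  have hC0 : (0:ℝ) ≤ |C| := abs_nonneg _
  set K : ℤ := ⌊(|C| + 32 + m / 64) / m⌋ with hK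
  have hK0 : 0 ≤ K := Int.le_floor.2 (by push_cast; positivity)
  have hKr : (K : ℝ) ≤ (|C| + 32 + m / 64) / m := Int.floor_le _
  set V : ℤ → ℝ := fun q => m * q + w with hV
  -- facts about bad pairs
  have key : ∀ q : ℤ, q ≠ 0 → ∀ x : ℝ, x ∈ Set.Ioc (1:ℝ) 2 →
      |C + a * x * V q| < 32 →
      (63/64) * m ≤ |V q| ∧ |V q| < |C| + 32 ∧ (|C| - 32) / 4 < |V q| ∧
        -K ≤ q ∧ q ≤ K := by
    intro q hq x hx hbad
    have hq1 : (1:ℝ) ≤ |(q:ℝ)| := by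
      have : (1:ℤ) ≤ |q| := Int.one_le_abs (by omega)
      calc (1:ℝ) ≤ ((|q| : ℤ) : ℝ) := by exact_mod_cast this
        _ = |(q:ℝ)| := by push_cast; rfl
    have hVlb' : m * |(q:ℝ)| - m/64 ≤ |V q| := by
      have h := abs_sub_abs_le_abs_sub (m * (q:ℝ)) (-w)
      simp only [sub_neg_eq_add] at h
      have h1 : |m * (q:ℝ)| = m * |(q:ℝ)| := by rw [abs_mul, abs_of_pos hm0]
      have h2 : |(-w)| = |w| := abs_neg w
      rw [h1, h2] at h
      have : m * |(q:ℝ)| - |w| ≤ |V q| := h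
      linarith
    have hVub' : |V q| ≤ m * |(q:ℝ)| + m/64 := by
      have h := abs_add_le (m * (q:ℝ)) w
      have h1 : |m * (q:ℝ)| = m * |(q:ℝ)| := by rw [abs_mul, abs_of_pos hm0]
      rw [h1] at h
      calc |V q| ≤ m * |(q:ℝ)| + |w| := h
        _ ≤ m * |(q:ℝ)| + m/64 := by linarith
    have hVlb : (63/64) * m ≤ |V q| := by nlinarith
    have hax1 : 1 < a * x := by nlinarith [hx.1]
    have hax4 : a * x ≤ 4 := by nlinarith [hx.1, hx.2]
    have habs : |a * x * V q| = (a*x) * |V q| := by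
      rw [abs_mul, abs_of_pos (by linarith : (0:ℝ) < a * x)]
    have hub : (a*x) * |V q| < |C| + 32 := by
      have h := abs_sub_abs_le_abs_sub (a * x * V q) (-C)
      simp only [sub_neg_eq_add] at h
      rw [add_comm (a * x * V q) C] at h
      rw [abs_neg, habs] at h
      linarith
    have hlb : |C| - 32 < (a*x) * |V q| := by
      have h := abs_sub_abs_le_abs_sub C (-(a * x * V q))
      simp only [sub_neg_eq_add] at h
      rw [abs_neg, habs] at h
      linarith
    have hVub : |V q| < |C| + 32 := by nlinarith [abs_nonneg (V q)]
    have hVlb2 : (|C| - 32)/4 < |V q| := by nlinarith [abs_nonneg (V q)]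
    have hqK : m * |(q:ℝ)| < |C| + 32 + m/64 := by linarith
    have hqKr : |(q:ℝ)| ≤ (|C| + 32 + m/64) / m := by
      rw [le_div_iff₀ hm0]; nlinarith
    have habsK : |q| ≤ K := by
      apply Int.le_floor.2
      calc ((|q| : ℤ) : ℝ) = |(q:ℝ)| := by push_cast; rfl
        _ ≤ _ := hqKr
    exact ⟨hVlb, hVub, hVlb2, (abs_le.mp habsK).1, (abs_le.mp habsK).2⟩
  -- the covering by balls
  set T : ℤ → Set ℝ := fun q => Metric.ball (-C / (a * V q)) (32 / (a * |V q|)) with hT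
  set P : ℤ → Prop := fun q => q ≠ 0 ∧ ∃ x, x ∈ Set.Ioc (1:ℝ) 2 ∧ |C + a * x * V q| < 32
    with hP
  set F' : Finset ℤ := (Finset.Icc (-K) K).filter P with hF'
  have hcover : {x : ℝ | x ∈ Set.Ioc (1:ℝ) 2 ∧ ∃ q : ℤ, q ≠ 0 ∧ |C + a * x * (m * q + w)| < 32}
      ⊆ ⋃ q ∈ F', T q := by
    rintro x ⟨hx, q, hq, hbad⟩
    have hbad' : |C + a * x * V q| < 32 := hbad
    obtain ⟨h1, h2, h3, h4, h5⟩ := key q hq x hx hbad'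
    have hVpos : 0 < |V q| := by linarith
    have hVne : V q ≠ 0 := by
      intro h; rw [h, abs_zero] at hVpos; exact lt_irrefl _ hVpos
    have haV : a * V q ≠ 0 := mul_ne_zero (by linarith) hVne
    refine Set.mem_iUnion.2 ⟨q, Set.mem_iUnion.2 ⟨?_, ?_⟩⟩
    · rw [hF', Finset.mem_filter]
      exact ⟨Finset.mem_Icc.2 ⟨h4, h5⟩, hq, x, hx, hbad'⟩
    · rw [hT]
      simp only [Metric.mem_ball, Real.dist_eq]
      have hxc : x - -C / (a * V q) = (C + a * x * V q) / (a * V q) := by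
        field_simp; ring
      rw [hxc, abs_div]
      have hden : |a * V q| = a * |V q| := by
        rw [abs_mul, abs_of_pos (by linarith : (0:ℝ) < a)]
      rw [hden]
      exact div_lt_div_of_pos_right hbad' (by positivity)
  refine le_trans (measure_mono hcover) (le_trans (measure_biUnion_finset_le F' T) ?_)
  have hfacts : ∀ q ∈ F', (63/64) * m ≤ |V q| ∧ (|C| - 32) / 4 < |V q| := by
    intro q hq
    rw [hF', Finset.mem_filter] at hq
    obtain ⟨-, hq0, x, hx, hbad⟩ := hq
    obtain ⟨h1, h2, h3, -, -⟩ := key q hq0 x hx hbad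
    exact ⟨h1, h3⟩
  have hvol : ∀ q ∈ F', volume (T q) = ENNReal.ofReal (64 / (a * |V q|)) := by
    intro q _
    rw [hT]
    simp only [Real.volume_ball]
    congr 1
    ring
  have hcard : (F'.card : ℝ) ≤ 2 * (K:ℝ) + 1 := by
    have h1 : F'.card ≤ (Finset.Icc (-K) K).card := Finset.card_filter_le _ _
    have h2 : (Finset.Icc (-K) K).card = (2*K+1).toNat := by
      rw [Int.card_Icc]; congr 1; ring
    have h3 : (((2*K+1).toNat : ℕ) : ℝ) = 2*(K:ℝ)+1 := by
      have h4 : (((2*K+1).toNat : ℕ) : ℤ) = 2*K+1 := Int.toNat_of_nonneg (by omega)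
      exact_mod_cast h4
    rw [← h3]
    exact_mod_cast h2 ▸ h1
  have hsum : ∀ L : ℝ, 0 ≤ L → (∀ q ∈ F', volume (T q) ≤ ENNReal.ofReal L) →
      (F'.card : ℝ) * L ≤ 1024 / m →
      ∑ q ∈ F', volume (T q) ≤ ENNReal.ofReal (1024 / m) := by
    intro L hL0 hL hfin
    calc ∑ q ∈ F', volume (T q) ≤ F'.card • ENNReal.ofReal L :=
          Finset.sum_le_card_nsmul _ _ _ hL
      _ = (F'.card : ℝ≥0∞) * ENNReal.ofReal L := nsmul_eq_mul _ _
      _ = ENNReal.ofReal (F'.card : ℝ) * ENNReal.ofReal L := by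
          rw [ENNReal.ofReal_natCast]
      _ = ENNReal.ofReal ((F'.card : ℝ) * L) := (ENNReal.ofReal_mul (Nat.cast_nonneg _)).symm
      _ ≤ ENNReal.ofReal (1024 / m) := ENNReal.ofReal_le_ofReal hfin
  rcases le_or_gt |C| (4*m) with hC | hC
  · -- small |C| : at most 9 values of q
    refine hsum (4096 / (63 * m)) (by positivity) ?_ ?_
    · intro q hq
      rw [hvol q hq]
      apply ENNReal.ofReal_le_ofReal
      have h1 := (hfacts q hq).1
      have haV : (63/64) * m ≤ a * |V q| := by nlinarith [abs_nonneg (V q)]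
      rw [div_le_div_iff₀ (by nlinarith [abs_nonneg (V q)]) (by nlinarith)]
      nlinarith
    · have hKle : (K:ℝ) ≤ 4 := by
        have h5 : (K:ℝ) < 5 := lt_of_le_of_lt hKr (by rw [div_lt_iff₀ hm0]; nlinarith)
        have h5' : K < 5 := by exact_mod_cast h5
        have : K ≤ 4 := by omega
        exact_mod_cast this
      have h9 : (F'.card : ℝ) ≤ 9 := by linarith
      have hc0 : (0:ℝ) ≤ (F'.card : ℝ) := Nat.cast_nonneg _
      calc (F'.card : ℝ) * (4096 / (63*m)) ≤ 9 * (4096 / (63*m)) :=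
            mul_le_mul_of_nonneg_right h9 (by positivity)
        _ = 36864 / (63*m) := by ring
        _ ≤ 1024 / m := by
            rw [div_le_div_iff₀ (by nlinarith) hm0]
            nlinarith
  · -- large |C|
    have hClb : (256:ℝ) < |C| := by nlinarith
    refine hsum (2048 / (7 * |C|)) (by positivity) ?_ ?_
    · intro q hq
      rw [hvol q hq]
      apply ENNReal.ofReal_le_ofReal
      have h3 := (hfacts q hq).2
      have hCpos : (0:ℝ) < |C| := by linarith
      have haV : 7 * |C| / 32 ≤ a * |V q| := by nlinarith [abs_nonneg (V q)]
      rw [div_le_div_iff₀ (by nlinarith [abs_nonneg (V q)]) (by linarith)]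
      linarith
    · have hcard2 : (F'.card : ℝ) ≤ 2 * ((|C| + 32 + m/64) / m) + 1 := by linarith
      have hq0 : (0:ℝ) ≤ (F'.card : ℝ) := Nat.cast_nonneg _
      have hCpos : (0:ℝ) < |C| := by linarith
      have key2 : (2 * ((|C| + 32 + m/64) / m) + 1) * (2048 / (7 * |C|)) ≤ 1024 / m := by
        have e1 : 2 * ((|C| + 32 + m/64) / m) + 1 = (2*|C| + 64 + m/32 + m) / m := by
          field_simp; ring
        rw [e1, div_mul_div_comm, div_le_div_iff₀ (by nlinarith) hm0]
        have h6 : (2*|C| + 64 + m/32 + m) * 2048 ≤ 7168 * |C| := by nlinarith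
        nlinarith [mul_le_mul_of_nonneg_right h6 hm0.le]
      calc (F'.card:ℝ) * (2048 / (7*|C|))
          ≤ (2 * ((|C| + 32 + m/64) / m) + 1) * (2048 / (7 * |C|)) :=
            mul_le_mul_of_nonneg_right hcard2 (by positivity)
        _ ≤ 1024 / m := key2


lemma sliceR {β : Type*} [MeasurableSpace β] (ν : Measure β) [SFinite ν]
    (S : Set (ℝ × β)) (hS : MeasurableSet S) (L : ℝ≥0∞)
    (hsub : ∀ p ∈ S, p.1 ∈ Set.Ioc (1:ℝ) 2)
    (hsl : ∀ x ∈ Set.Ioc (1:ℝ) 2, ν {y | (x, y) ∈ S} ≤ L) :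
    (volume : Measure ℝ).prod ν S ≤ L := by
  rw [Measure.prod_apply hS]
  calc ∫⁻ x, ν (Prod.mk x ⁻¹' S) ≤ ∫⁻ x, (Set.Ioc (1:ℝ) 2).indicator (fun _ => L) x := by
        apply lintegral_mono
        intro x
        by_cases hx : x ∈ Set.Ioc (1:ℝ) 2
        · rw [Set.indicator_of_mem hx]; exact hsl x hx
        · rw [Set.indicator_of_notMem hx]
          have he : Prod.mk x ⁻¹' S = ∅ := by
            ext y; simp only [Set.mem_preimage, Set.mem_empty_iff_false, iff_false]
            intro hy; exact hx (hsub _ hy)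
          simp [he]
    _ = L * volume (Set.Ioc (1:ℝ) 2) := lintegral_indicator_const measurableSet_Ioc L
    _ = L := by rw [Real.volume_Ioc]; norm_num

lemma sliceL {β : Type*} [MeasurableSpace β] (ν : Measure β) [SFinite ν]
    (S : Set (ℝ × β)) (hS : MeasurableSet S) (Y : Set β) (hY : MeasurableSet Y)
    (hYν : ν Y ≤ 1) (L : ℝ≥0∞)
    (hsub : ∀ p ∈ S, p.2 ∈ Y)
    (hsl : ∀ y ∈ Y, volume {x : ℝ | (x, y) ∈ S} ≤ L) :
    (volume : Measure ℝ).prod ν S ≤ L := by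
  rw [Measure.prod_apply_symm hS]
  calc ∫⁻ y, volume ((fun x => (x, y)) ⁻¹' S) ∂ν ≤ ∫⁻ y, Y.indicator (fun _ => L) y ∂ν := by
        apply lintegral_mono
        intro y
        by_cases hy : y ∈ Y
        · rw [Set.indicator_of_mem hy]; exact hsl y hy
        · rw [Set.indicator_of_notMem hy]
          have he : (fun x => (x, y)) ⁻¹' S = ∅ := by
            ext x; simp only [Set.mem_preimage, Set.mem_empty_iff_false, iff_false]
            intro hx; exact hy (hsub _ hx)
          simp [he]
    _ = L * ν Y := lintegral_indicator_const hY L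
    _ ≤ L * 1 := mul_le_mul_right hYν L
    _ = L := mul_one L

noncomputable section

def Cube (h : ℝ × ℝ × ℝ × ℝ) : Prop :=
  h.1 ∈ Set.Ioc (1:ℝ) 2 ∧ h.2.1 ∈ Set.Ioc (1:ℝ) 2 ∧
    h.2.2.1 ∈ Set.Ioc (1:ℝ) 2 ∧ h.2.2.2 ∈ Set.Ioc (1:ℝ) 2

lemma cube_meas : MeasurableSet {h : ℝ × ℝ × ℝ × ℝ | Cube h} := by
  unfold Cube
  apply MeasurableSet.inter
  · exact measurableSet_Ioc.preimage measurable_fst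
  apply MeasurableSet.inter
  · exact measurableSet_Ioc.preimage (measurable_fst.comp measurable_snd)
  apply MeasurableSet.inter
  · exact measurableSet_Ioc.preimage
      (measurable_fst.comp (measurable_snd.comp measurable_snd))
  · exact measurableSet_Ioc.preimage
      (measurable_snd.comp (measurable_snd.comp measurable_snd))

/-- Outage set for the case `q1 ≠ 0`: vary `h22`. -/
def EA (u v m w : ℝ) : Set (ℝ × ℝ × ℝ × ℝ) :=
  {h | Cube h ∧ ∃ q : ℤ, q ≠ 0 ∧
    |u * (h.1 * h.2.1) + (h.1 * h.2.2.2) * (m * q + w) + v * (h.2.1 * h.2.2.1)| < 32}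

/-- Outage set for the case `q1 = 0 ∧ q0 ≠ 0`: vary `h11`. -/
def EB (v m w : ℝ) : Set (ℝ × ℝ × ℝ × ℝ) :=
  {h | Cube h ∧ ∃ q : ℤ, q ≠ 0 ∧
    |(h.1 * h.2.1) * (m * q) + (h.1 * h.2.2.2) * w + v * (h.2.1 * h.2.2.1)| < 32}

lemma EA_meas (u v m w : ℝ) : MeasurableSet (EA u v m w) := by
  unfold EA
  apply MeasurableSet.inter cube_meas
  have : {h : ℝ × ℝ × ℝ × ℝ | ∃ q : ℤ, q ≠ 0 ∧
      |u * (h.1 * h.2.1) + (h.1 * h.2.2.2) * (m * q + w) + v * (h.2.1 * h.2.2.1)| < 32} =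
      ⋃ q : ℤ, {h : ℝ × ℝ × ℝ × ℝ | q ≠ 0 ∧
      |u * (h.1 * h.2.1) + (h.1 * h.2.2.2) * (m * q + w) + v * (h.2.1 * h.2.2.1)| < 32} :=
    Set.setOf_exists _
  show MeasurableSet {h : ℝ × ℝ × ℝ × ℝ | ∃ q : ℤ, q ≠ 0 ∧
      |u * (h.1 * h.2.1) + (h.1 * h.2.2.2) * (m * q + w) + v * (h.2.1 * h.2.2.1)| < 32}
  rw [this]
  apply MeasurableSet.iUnion
  intro q
  by_cases hq : q = 0
  · simp [hq]
  · simp only [hq, ne_eq, not_false_eq_true, true_and]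
    apply measurableSet_lt ?_ measurable_const
    fun_prop

lemma EB_meas (v m w : ℝ) : MeasurableSet (EB v m w) := by
  unfold EB
  apply MeasurableSet.inter cube_meas
  have : {h : ℝ × ℝ × ℝ × ℝ | ∃ q : ℤ, q ≠ 0 ∧
      |(h.1 * h.2.1) * (m * q) + (h.1 * h.2.2.2) * w + v * (h.2.1 * h.2.2.1)| < 32} =
      ⋃ q : ℤ, {h : ℝ × ℝ × ℝ × ℝ | q ≠ 0 ∧
      |(h.1 * h.2.1) * (m * q) + (h.1 * h.2.2.2) * w + v * (h.2.1 * h.2.2.1)| < 32} :=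
    Set.setOf_exists _
  show MeasurableSet {h : ℝ × ℝ × ℝ × ℝ | ∃ q : ℤ, q ≠ 0 ∧
      |(h.1 * h.2.1) * (m * q) + (h.1 * h.2.2.2) * w + v * (h.2.1 * h.2.2.1)| < 32}
  rw [this]
  apply MeasurableSet.iUnion
  intro q
  by_cases hq : q = 0
  · simp [hq]
  · simp only [hq, ne_eq, not_false_eq_true, true_and]
    apply measurableSet_lt ?_ measurable_const
    fun_prop

lemma EA_bound (u v m w : ℝ) (hm : 64 ≤ m) (hw : |w| ≤ m / 64) :
    volume (EA u v m w) ≤ ENNReal.ofReal (1024 / m) := by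
  rw [Measure.volume_eq_prod]
  apply sliceR _ _ (EA_meas u v m w)
  · rintro ⟨x1, y⟩ ⟨hc, -⟩; exact hc.1
  intro x1 hx1
  rw [Measure.volume_eq_prod]
  apply sliceR _ _ ((EA_meas u v m w).preimage (measurable_prodMk_left))
  · rintro ⟨x2, y⟩ ⟨hc, -⟩; exact hc.2.1
  intro x2 hx2
  rw [Measure.volume_eq_prod]
  apply sliceR _ _ (((EA_meas u v m w).preimage
    (measurable_prodMk_left)).preimage (measurable_prodMk_left))
  · rintro ⟨x3, y⟩ ⟨hc, -⟩; exact hc.2.2.1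
  intro x3 hx3
  -- innermost slice: apply core with a := x1
  refine le_trans (measure_mono ?_) (core x1 (u * (x1 * x2) + v * (x2 * x3)) m w hx1.1 hx1.2 hm hw)
  rintro x4 ⟨hc, q, hq, hlt⟩
  refine ⟨hc.2.2.2, q, hq, ?_⟩
  have : u * (x1 * x2) + v * (x2 * x3) + x1 * x4 * (m * ↑q + w) =
      u * (x1 * x2) + (x1 * x4) * (m * ↑q + w) + v * (x2 * x3) := by ring
  rw [this]
  exact hlt

lemma EB_bound (v m w : ℝ) (hm : 64 ≤ m) (hw : |w| ≤ m / 128) :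
    volume (EB v m w) ≤ ENNReal.ofReal (1024 / m) := by
  rw [Measure.volume_eq_prod]
  apply sliceL _ _ (EB_meas v m w)
    ((Set.Ioc (1:ℝ) 2) ×ˢ ((Set.Ioc (1:ℝ) 2) ×ˢ (Set.Ioc (1:ℝ) 2)))
    (measurableSet_Ioc.prod (measurableSet_Ioc.prod measurableSet_Ioc))
  · rw [Measure.volume_eq_prod, Measure.prod_prod, Measure.volume_eq_prod, Measure.prod_prod,
      Real.volume_Ioc]
    norm_num
  · rintro ⟨x1, y⟩ ⟨hc, -⟩; exact ⟨hc.2.1, hc.2.2.1, hc.2.2.2⟩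
  rintro ⟨x2, x3, x4⟩ ⟨hx2, hx3, hx4⟩
  -- innermost slice: apply core with a := x2
  have hx2' : (1:ℝ) < x2 := hx2.1
  refine le_trans (measure_mono ?_) (core x2 (v * (x2 * x3)) m ((x4 / x2) * w) hx2.1 hx2.2 hm ?_)
  · rintro x1 ⟨hc, q, hq, hlt⟩
    refine ⟨hc.1, q, hq, ?_⟩
    have : v * (x2 * x3) + x2 * x1 * (m * ↑q + x4 / x2 * w) =
        (x1 * x2) * (m * q) + (x1 * x4) * w + v * (x2 * x3) := by
      field_simp
      ring
    rw [this]
    exact hlt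
  · have hx2p : (0:ℝ) < x2 := lt_trans one_pos hx2.1
    have hx4p : (0:ℝ) < x4 := lt_trans one_pos hx4.1
    have hr : x4 / x2 ≤ 2 := by
      rw [div_le_iff₀ hx2p]; nlinarith [hx4.2, hx2.1]
    have h1 : |x4 / x2 * w| = (x4 / x2) * |w| := by
      rw [abs_mul, abs_of_pos (div_pos hx4p hx2p)]
    rw [h1]
    calc (x4 / x2) * |w| ≤ 2 * (m / 128) := by
          apply mul_le_mul hr hw (abs_nonneg w) (by norm_num)
      _ = m / 64 := by ring

lemma cardIcc (R : ℕ) : (((Finset.Icc (-(2^R:ℤ)) (2^R)).card : ℕ) : ℝ) = 2*(2:ℝ)^R + 1 := by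
  rw [Int.card_Icc]
  have h : (2^R + 1 - (-(2^R)) : ℤ) = 2*2^R+1 := by ring
  rw [h]
  have h2 : ((2*2^R+1 : ℤ).toNat : ℤ) = 2*2^R+1 := Int.toNat_of_nonneg (by positivity)
  have := congrArg (fun z : ℤ => (z : ℝ)) h2
  push_cast at this ⊢
  linarith

set_option maxHeartbeats 2000000 in
/-- Lemma 2 of the paper in its nondegenerate form — minimum
constellation distance at least 32 at a generic receiver of the Gaussian
X-channel, outside an outage set of measure at most `δ`. -/
theorem stmt_11 (δ : ℝ) (hδ : δ ∈ Set.Ioc (0:ℝ) 1)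
    (n0 n1 n2 R0 R1 R2 R3 : ℕ)
    (hn10 : n0 ≤ n1) (hn02 : n2 ≤ n0)
    (hc1 : (R0 : ℝ) + R1 + R2 + R3 ≤ (n1 : ℝ) - 6 - Real.logb 2 (6652 / δ))
    (hc2 : (R0 : ℝ) + R2 + R3 ≤ (n0 : ℝ) - 6 - Real.logb 2 (6652 / δ))
    (hc3 : (R2 : ℝ) + R3 ≤ (n2 : ℝ) - 6) :
    ∃ B : Set (ℝ × ℝ × ℝ × ℝ),
      B ⊆ {h | h.1 ∈ Set.Ioc (1:ℝ) 2 ∧ h.2.1 ∈ Set.Ioc (1:ℝ) 2 ∧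
        h.2.2.1 ∈ Set.Ioc (1:ℝ) 2 ∧ h.2.2.2 ∈ Set.Ioc (1:ℝ) 2} ∧
      volume B ≤ ENNReal.ofReal δ ∧
      ∀ h11 h12 h21 h22 : ℝ,
        h11 ∈ Set.Ioc (1:ℝ) 2 → h12 ∈ Set.Ioc (1:ℝ) 2 →
        h21 ∈ Set.Ioc (1:ℝ) 2 → h22 ∈ Set.Ioc (1:ℝ) 2 →
        (h11, h12, h21, h22) ∉ B →
        ∀ q0 q1 q2 q3 : ℤ,
          |q0| ≤ 2 ^ R0 → |q1| ≤ 2 ^ R1 → |q2| ≤ 2 ^ R2 → |q3| ≤ 2 ^ R3 →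
          (q0, q1, q2) ≠ (0, 0, 0) →
          (32 : ℝ) ≤
            |(2:ℝ) ^ ((n0 : ℤ) - (R0 : ℤ)) * (h11 * h12) * (q0 : ℝ)
              + (h11 * h22) * ((2:ℝ) ^ ((n1 : ℤ) - (R1 : ℤ)) * (q1 : ℝ) + (q3 : ℝ))
              + (2:ℝ) ^ ((n2 : ℤ) - (R2 : ℤ)) * (h12 * h21) * (q2 : ℝ)| := by
  obtain ⟨hδ0, hδ1⟩ := hδ
  classical
  -- abbreviations
  set m0 : ℝ := (2:ℝ) ^ ((n0 : ℤ) - (R0 : ℤ)) with hm0def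
  set m1 : ℝ := (2:ℝ) ^ ((n1 : ℤ) - (R1 : ℤ)) with hm1def
  set m2 : ℝ := (2:ℝ) ^ ((n2 : ℤ) - (R2 : ℤ)) with hm2def
  -- the logarithm
  set Lg : ℝ := Real.logb 2 (6652 / δ) with hLg
  have hLg1 : 1 ≤ Lg := by
    rw [hLg]
    have h1 : (2:ℝ) ≤ 6652 / δ := by
      rw [le_div_iff₀ hδ0]; nlinarith
    calc (1:ℝ) = Real.logb 2 2 := (Real.logb_self_eq_one (by norm_num : (1:ℝ) < 2)).symm
      _ ≤ Real.logb 2 (6652/δ) :=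
        Real.logb_le_logb_of_le (by norm_num) (by norm_num) h1
  -- integer consequences
  have hnat1 : R0 + R1 + R2 + R3 + 7 ≤ n1 := by
    have : (R0:ℝ) + R1 + R2 + R3 + 7 ≤ (n1:ℝ) := by linarith
    exact_mod_cast this
  have hnat2 : R0 + R2 + R3 + 7 ≤ n0 := by
    have : (R0:ℝ) + R2 + R3 + 7 ≤ (n0:ℝ) := by linarith
    exact_mod_cast this
  have hnat3 : R2 + R3 + 6 ≤ n2 := by
    have h : (R2:ℝ) + R3 + 6 ≤ (n2:ℝ) := by linarith
    exact_mod_cast h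
  -- power facts
  have h2pos : ∀ z : ℤ, (0:ℝ) < 2^z := fun z => zpow_pos (by norm_num) z
  have hmono : ∀ y z : ℤ, y ≤ z → (2:ℝ)^y ≤ (2:ℝ)^z :=
    fun y z h => zpow_le_zpow_right₀ (by norm_num) h
  have hm1_64 : (64:ℝ) ≤ m1 := by
    have : ((64:ℝ)) = 2^(6:ℤ) := by norm_num
    rw [this, hm1def]
    exact hmono 6 _ (by omega)
  have hm0_64 : (64:ℝ) ≤ m0 := by
    have : ((64:ℝ)) = 2^(6:ℤ) := by norm_num
    rw [this, hm0def]
    exact hmono 6 _ (by omega)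
  have habs_cast : ∀ q : ℤ, |q| ≤ 2^R3 → |(q:ℝ)| ≤ (2:ℝ)^(R3:ℤ) := by
    intro q hq
    have h1 : ((|q| : ℤ) : ℝ) ≤ ((2^R3 : ℤ) : ℝ) := by exact_mod_cast hq
    push_cast at h1
    calc |(q:ℝ)| ≤ (2:ℝ)^(R3:ℕ) := h1
      _ = (2:ℝ)^(R3:ℤ) := (zpow_natCast 2 R3).symm
  have hw1 : ∀ q : ℤ, |q| ≤ 2^R3 → |(q:ℝ)| ≤ m1 / 64 := by
    intro q hq
    refine le_trans (habs_cast q hq) ?_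
    have h2 : (2:ℝ)^(R3:ℤ) ≤ 2^((n1:ℤ) - R1 - 6) := hmono _ _ (by omega)
    have h3 : (2:ℝ)^((n1:ℤ) - R1 - 6) = m1 / 64 := by
      rw [hm1def, zpow_sub₀ (by norm_num : (2:ℝ) ≠ 0)]
      norm_num
    linarith
  have hw0 : ∀ q : ℤ, |q| ≤ 2^R3 → |(q:ℝ)| ≤ m0 / 128 := by
    intro q hq
    refine le_trans (habs_cast q hq) ?_
    have h2 : (2:ℝ)^(R3:ℤ) ≤ 2^((n0:ℤ) - R0 - 7) := hmono _ _ (by omega)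
    have h3 : (2:ℝ)^((n0:ℤ) - R0 - 7) = m0 / 128 := by
      rw [hm0def, zpow_sub₀ (by norm_num : (2:ℝ) ≠ 0)]
      norm_num
    linarith
  have hm2R3 : 64 * (2:ℝ)^(R3:ℤ) ≤ m2 := by
    have h2 : (2:ℝ)^((R3:ℤ) + 6) ≤ 2^((n2:ℤ) - R2) := hmono _ _ (by omega)
    rw [zpow_add₀ (by norm_num : (2:ℝ) ≠ 0)] at h2
    rw [hm2def]
    norm_num at h2 ⊢
    linarith
  -- the key exponent estimates
  have hrp : ∀ e : ℤ, (e:ℝ) ≤ -6 - Lg → (2:ℝ)^e ≤ δ / 425728 := by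
    intro e he
    have h1 : (2:ℝ)^e = (2:ℝ)^((e:ℝ)) := (Real.rpow_intCast 2 e).symm
    have h2 : (2:ℝ)^((e:ℝ)) ≤ (2:ℝ)^(-6 - Lg : ℝ) :=
      Real.rpow_le_rpow_of_exponent_le (by norm_num) he
    have h3 : (2:ℝ)^(-6 - Lg : ℝ) = δ / 425728 := by
      have e1 : (-6 - Lg : ℝ) = (-6) + (-Lg) := by ring
      rw [e1, Real.rpow_add (by norm_num : (0:ℝ) < 2), Real.rpow_neg (by norm_num : (0:ℝ) ≤ 2) Lg,
        hLg, Real.rpow_logb (by norm_num) (by norm_num) (by positivity)]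
      have e2 : (2:ℝ)^(-6 : ℝ) = 1/64 := by
        rw [show (-6:ℝ) = ((-6 : ℤ) : ℝ) by norm_num, Real.rpow_intCast]
        norm_num
      rw [e2, inv_div]
      ring
    rw [h1]
    rw [h3] at h2
    exact h2
  have hX1 : (2:ℝ)^(R0+R2+R3 : ℕ) / m1 ≤ δ / 425728 := by
    have h1 : (2:ℝ)^(R0+R2+R3 : ℕ) / m1 = 2^(((R0+R2+R3 : ℕ) : ℤ) - ((n1:ℤ) - R1)) := by
      rw [hm1def, ← zpow_natCast (2:ℝ) (R0+R2+R3), ← zpow_sub₀ (by norm_num : (2:ℝ) ≠ 0)]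
    rw [h1]
    apply hrp
    push_cast
    linarith
  have hX2 : (2:ℝ)^(R2+R3 : ℕ) / m0 ≤ δ / 425728 := by
    have h1 : (2:ℝ)^(R2+R3 : ℕ) / m0 = 2^(((R2+R3 : ℕ) : ℤ) - ((n0:ℤ) - R0)) := by
      rw [hm0def, ← zpow_natCast (2:ℝ) (R2+R3), ← zpow_sub₀ (by norm_num : (2:ℝ) ≠ 0)]
    rw [h1]
    apply hrp
    push_cast
    linarith
  -- positivity of the powers
  have hm0pos : (0:ℝ) < m0 := hm0def ▸ h2pos _
  have hm1pos : (0:ℝ) < m1 := hm1def ▸ h2pos _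
  have hm2pos : (0:ℝ) < m2 := hm2def ▸ h2pos _
  have h2R3one : (1:ℝ) ≤ (2:ℝ)^(R3:ℤ) := by
    calc (1:ℝ) = 2^(0:ℤ) := by norm_num
      _ ≤ 2^(R3:ℤ) := hmono 0 _ (Int.natCast_nonneg R3)
  -- the outage set
  set B : Set (ℝ × ℝ × ℝ × ℝ) := {h | Cube h ∧ ∃ q0 q1 q2 q3 : ℤ,
    |q0| ≤ 2^R0 ∧ |q1| ≤ 2^R1 ∧ |q2| ≤ 2^R2 ∧ |q3| ≤ 2^R3 ∧ (q0, q1, q2) ≠ (0,0,0) ∧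
    |m0 * (h.1 * h.2.1) * q0 + (h.1 * h.2.2.2) * (m1 * q1 + q3)
      + m2 * (h.2.1 * h.2.2.1) * q2| < 32} with hBdef
  refine ⟨B, fun h hh => hh.1, ?_, ?_⟩
  · -- volume bound
    set TA : Finset (ℤ × ℤ × ℤ) :=
      Finset.Icc (-(2^R0:ℤ)) (2^R0) ×ˢ
        (Finset.Icc (-(2^R2:ℤ)) (2^R2) ×ˢ Finset.Icc (-(2^R3:ℤ)) (2^R3)) with hTA
    set TB : Finset (ℤ × ℤ) :=
      Finset.Icc (-(2^R2:ℤ)) (2^R2) ×ˢ Finset.Icc (-(2^R3:ℤ)) (2^R3) with hTB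
    have hsub : B ⊆ (⋃ t ∈ TA, EA (m0 * t.1) (m2 * t.2.1) m1 (t.2.2 : ℝ)) ∪
        (⋃ t ∈ TB, EB (m2 * t.1) m0 (t.2 : ℝ)) := by
      rintro h ⟨hc, q0, q1, q2, q3, hb0, hb1, hb2, hb3, hne, hlt⟩
      by_cases hq1 : q1 = 0
      · by_cases hq0 : q0 = 0
        · -- impossible : a contradiction
          exfalso
          have hq2 : q2 ≠ 0 := fun h2 => hne (by rw [hq0, hq1, h2])
          subst hq0; subst hq1
          obtain ⟨hx1, hx2, hx3, hx4⟩ := hc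
          have hq2' : (1:ℝ) ≤ |(q2:ℝ)| := by
            have h1 : (1:ℤ) ≤ |q2| := Int.one_le_abs (by omega)
            calc (1:ℝ) ≤ ((|q2|:ℤ):ℝ) := by exact_mod_cast h1
              _ = |(q2:ℝ)| := by push_cast; rfl
          have hq3' : |(q3:ℝ)| ≤ (2:ℝ)^(R3:ℤ) := habs_cast q3 hb3
          rw [show m0 * (h.1 * h.2.1) * ((0:ℤ):ℝ)
                + (h.1 * h.2.2.2) * (m1 * ((0:ℤ):ℝ) + (q3:ℝ))
                + m2 * (h.2.1 * h.2.2.1) * (q2:ℝ)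
              = (h.1 * h.2.2.2) * (q3:ℝ) + m2 * (h.2.1 * h.2.2.1) * (q2:ℝ) by
            push_cast; ring] at hlt
          set X : ℝ := (h.1 * h.2.2.2) * (q3:ℝ) with hX
          set Y : ℝ := m2 * (h.2.1 * h.2.2.1) * (q2:ℝ) with hY
          have hBig : m2 ≤ |Y| := by
            rw [hY, abs_mul, abs_mul]
            have h23 : (1:ℝ) ≤ |h.2.1 * h.2.2.1| := by
              rw [abs_of_pos (by nlinarith [hx2.1, hx3.1] : (0:ℝ) < h.2.1 * h.2.2.1)]
              nlinarith [hx2.1, hx3.1]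
            rw [abs_of_pos hm2pos]
            have hprod : (1:ℝ) ≤ |h.2.1 * h.2.2.1| * |(q2:ℝ)| := by
              nlinarith [abs_nonneg (h.2.1 * h.2.2.1), abs_nonneg ((q2:ℝ))]
            nlinarith [mul_le_mul_of_nonneg_left hprod hm2pos.le]
          have hSmall : |X| ≤ 4 * (2:ℝ)^(R3:ℤ) := by
            rw [hX, abs_mul]
            have h14 : |h.1 * h.2.2.2| ≤ 4 := by
              rw [abs_of_pos (by nlinarith [hx1.1, hx4.1] : (0:ℝ) < h.1 * h.2.2.2)]
              nlinarith [hx1.2, hx4.2, hx1.1, hx4.1]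
            nlinarith [abs_nonneg ((q3:ℝ)), abs_nonneg (h.1 * h.2.2.2)]
          have htri : |Y| ≤ |X + Y| + |X| := by
            calc |Y| = |(X + Y) + (-X)| := by ring_nf
              _ ≤ |X + Y| + |(-X)| := abs_add_le _ _
              _ = |X + Y| + |X| := by rw [abs_neg]
          have : 64 * (2:ℝ)^(R3:ℤ) ≤ m2 := hm2R3
          linarith
        · -- q1 = 0, q0 ≠ 0 : case B
          right
          refine Set.mem_iUnion₂.2 ⟨(q2, q3), ?_, ?_⟩
          · rw [hTB]
            exact Finset.mem_product.2
              ⟨Finset.mem_Icc.2 (abs_le.1 hb2), Finset.mem_Icc.2 (abs_le.1 hb3)⟩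
          · subst hq1
            refine ⟨hc, q0, hq0, ?_⟩
            rw [show (h.1 * h.2.1) * (m0 * (q0:ℝ)) + (h.1 * h.2.2.2) * (q3:ℝ)
                  + (m2 * (q2:ℝ)) * (h.2.1 * h.2.2.1)
                = m0 * (h.1 * h.2.1) * (q0:ℝ)
                  + (h.1 * h.2.2.2) * (m1 * ((0:ℤ):ℝ) + (q3:ℝ))
                  + m2 * (h.2.1 * h.2.2.1) * (q2:ℝ) by push_cast; ring]
            exact hlt
      · -- q1 ≠ 0 : case A
        left
        refine Set.mem_iUnion₂.2 ⟨(q0, q2, q3), ?_, ?_⟩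
        · rw [hTA]
          exact Finset.mem_product.2 ⟨Finset.mem_Icc.2 (abs_le.1 hb0),
            Finset.mem_product.2
              ⟨Finset.mem_Icc.2 (abs_le.1 hb2), Finset.mem_Icc.2 (abs_le.1 hb3)⟩⟩
        · refine ⟨hc, q1, hq1, ?_⟩
          rw [show (m0 * (q0:ℝ)) * (h.1 * h.2.1) + (h.1 * h.2.2.2) * (m1 * (q1:ℝ) + (q3:ℝ))
                + (m2 * (q2:ℝ)) * (h.2.1 * h.2.2.1)
              = m0 * (h.1 * h.2.1) * (q0:ℝ) + (h.1 * h.2.2.2) * (m1 * (q1:ℝ) + (q3:ℝ))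
                + m2 * (h.2.1 * h.2.2.1) * (q2:ℝ) by ring]
          exact hlt
    -- per-set bounds and sums
    have hsumA : volume (⋃ t ∈ TA, EA (m0 * t.1) (m2 * t.2.1) m1 (t.2.2 : ℝ)) ≤
        ENNReal.ofReal ((TA.card : ℝ) * (1024 / m1)) := by
      refine le_trans (measure_biUnion_finset_le TA _) ?_
      have hper : ∀ t ∈ TA, volume (EA (m0 * t.1) (m2 * t.2.1) m1 (t.2.2:ℝ)) ≤
          ENNReal.ofReal (1024/m1) := by
        intro t ht
        apply EA_bound _ _ _ _ hm1_64
        rw [hTA] at ht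
        have ht3 := (Finset.mem_product.1 (Finset.mem_product.1 ht).2).2
        exact hw1 _ (abs_le.2 (Finset.mem_Icc.1 ht3))
      calc ∑ t ∈ TA, volume (EA (m0 * t.1) (m2 * t.2.1) m1 (t.2.2:ℝ))
          ≤ TA.card • ENNReal.ofReal (1024/m1) := Finset.sum_le_card_nsmul _ _ _ hper
        _ = (TA.card : ℝ≥0∞) * ENNReal.ofReal (1024/m1) := nsmul_eq_mul _ _
        _ = ENNReal.ofReal (TA.card : ℝ) * ENNReal.ofReal (1024/m1) := by
            rw [ENNReal.ofReal_natCast]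
        _ = ENNReal.ofReal ((TA.card:ℝ) * (1024/m1)) :=
            (ENNReal.ofReal_mul (Nat.cast_nonneg _)).symm
    have hsumB : volume (⋃ t ∈ TB, EB (m2 * t.1) m0 (t.2 : ℝ)) ≤
        ENNReal.ofReal ((TB.card : ℝ) * (1024 / m0)) := by
      refine le_trans (measure_biUnion_finset_le TB _) ?_
      have hper : ∀ t ∈ TB, volume (EB (m2 * t.1) m0 (t.2:ℝ)) ≤
          ENNReal.ofReal (1024/m0) := by
        intro t ht
        apply EB_bound _ _ _ hm0_64
        rw [hTB] at ht
        have ht3 := (Finset.mem_product.1 ht).2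
        exact hw0 _ (abs_le.2 (Finset.mem_Icc.1 ht3))
      calc ∑ t ∈ TB, volume (EB (m2 * t.1) m0 (t.2:ℝ))
          ≤ TB.card • ENNReal.ofReal (1024/m0) := Finset.sum_le_card_nsmul _ _ _ hper
        _ = (TB.card : ℝ≥0∞) * ENNReal.ofReal (1024/m0) := nsmul_eq_mul _ _
        _ = ENNReal.ofReal (TB.card : ℝ) * ENNReal.ofReal (1024/m0) := by
            rw [ENNReal.ofReal_natCast]
        _ = ENNReal.ofReal ((TB.card:ℝ) * (1024/m0)) :=
            (ENNReal.ofReal_mul (Nat.cast_nonneg _)).symm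
    -- cardinalities
    have hp0 : (1:ℝ) ≤ 2^R0 := one_le_pow₀ (by norm_num)
    have hp2 : (1:ℝ) ≤ 2^R2 := one_le_pow₀ (by norm_num)
    have hp3 : (1:ℝ) ≤ 2^R3 := one_le_pow₀ (by norm_num)
    have hcA : (TA.card : ℝ) ≤ 27 * 2^(R0+R2+R3 : ℕ) := by
      rw [hTA, Finset.card_product, Finset.card_product]
      push_cast
      rw [cardIcc R0, cardIcc R2, cardIcc R3, pow_add, pow_add]
      have f0 : 2*(2:ℝ)^R0+1 ≤ 3*(2:ℝ)^R0 := by linarith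
      have f2 : 2*(2:ℝ)^R2+1 ≤ 3*(2:ℝ)^R2 := by linarith
      have f3 : 2*(2:ℝ)^R3+1 ≤ 3*(2:ℝ)^R3 := by linarith
      have hmu : (2*(2:ℝ)^R2+1) * (2*(2:ℝ)^R3+1) ≤ (3*(2:ℝ)^R2) * (3*(2:ℝ)^R3) :=
        mul_le_mul f2 f3 (by positivity) (by positivity)
      nlinarith [mul_le_mul f0 hmu (by positivity) (by positivity : (0:ℝ) ≤ 3*(2:ℝ)^R0)]
    have hcB : (TB.card : ℝ) ≤ 9 * 2^(R2+R3 : ℕ) := by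
      rw [hTB, Finset.card_product]
      push_cast
      rw [cardIcc R2, cardIcc R3, pow_add]
      nlinarith
    -- assemble
    have hfinal : (TA.card : ℝ) * (1024 / m1) + (TB.card : ℝ) * (1024 / m0) ≤ δ := by
      have hA' : (TA.card : ℝ) * (1024 / m1) ≤ 27648 * ((2:ℝ)^(R0+R2+R3:ℕ) / m1) := by
        have e : (27:ℝ) * 2^(R0+R2+R3:ℕ) * (1024 / m1) = 27648 * (2^(R0+R2+R3:ℕ) / m1) := by
          ring
        have h1 : (TA.card : ℝ) * (1024 / m1) ≤ 27 * 2^(R0+R2+R3:ℕ) * (1024 / m1) :=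
          mul_le_mul_of_nonneg_right hcA (le_of_lt (div_pos (by norm_num) hm1pos))
        linarith
      have hB' : (TB.card : ℝ) * (1024 / m0) ≤ 9216 * ((2:ℝ)^(R2+R3:ℕ) / m0) := by
        have e : (9:ℝ) * 2^(R2+R3:ℕ) * (1024 / m0) = 9216 * (2^(R2+R3:ℕ) / m0) := by ring
        have h1 : (TB.card : ℝ) * (1024 / m0) ≤ 9 * 2^(R2+R3:ℕ) * (1024 / m0) :=
          mul_le_mul_of_nonneg_right hcB (le_of_lt (div_pos (by norm_num) hm0pos))
        linarith
      have := hX1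
      have := hX2
      linarith
    calc volume B ≤ volume ((⋃ t ∈ TA, EA (m0 * t.1) (m2 * t.2.1) m1 (t.2.2 : ℝ)) ∪
          (⋃ t ∈ TB, EB (m2 * t.1) m0 (t.2 : ℝ))) := measure_mono hsub
      _ ≤ volume (⋃ t ∈ TA, EA (m0 * t.1) (m2 * t.2.1) m1 (t.2.2 : ℝ))
          + volume (⋃ t ∈ TB, EB (m2 * t.1) m0 (t.2 : ℝ)) := measure_union_le _ _
      _ ≤ ENNReal.ofReal ((TA.card : ℝ) * (1024 / m1))
          + ENNReal.ofReal ((TB.card : ℝ) * (1024 / m0)) := add_le_add hsumA hsumB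
      _ = ENNReal.ofReal ((TA.card : ℝ) * (1024 / m1) + (TB.card : ℝ) * (1024 / m0)) :=
          (ENNReal.ofReal_add
            (mul_nonneg (Nat.cast_nonneg _) (le_of_lt (div_pos (by norm_num) hm1pos)))
            (mul_nonneg (Nat.cast_nonneg _) (le_of_lt (div_pos (by norm_num) hm0pos)))).symm
      _ ≤ ENNReal.ofReal δ := ENNReal.ofReal_le_ofReal hfinal
  · -- the distance guarantee off `B`
    rintro h11 h12 h21 h22 hx1 hx2 hx3 hx4 hnB q0 q1 q2 q3 hb0 hb1 hb2 hb3 hne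
    by_contra hcon
    push_neg at hcon
    exact hnB ⟨⟨hx1, hx2, hx3, hx4⟩, q0, q1, q2, q3, hb0, hb1, hb2, hb3, hne, hcon⟩

end
end helpers
end

section
/- Let n11, n12, n21, n22 be nonnegative integers with min{n11,n22} ≥ max{n12,n21}, and let R11, R12, R21, R22 be real numbers satisfying: R11+R12+R22 ≤ max{n11,n12} + (n22−n12)⁺; R11+R21+R22 ≤ max{n21,n22} + (n11−n21)⁺; R11+R12+R21 ≤ max{n11,n12} + (n21−n11)⁺; R12+R21+R22 ≤ max{n21,n22} + (n12−n22)⁺; R11+R12+R21+R22 ≤ max{n12, n11−n21} + max{n21, n22−n12}; R11+R12+R21+R22 ≤ max{n11, n12−n22} + max{n22, n21−n11}; 2R11+R12+R21+R22 ≤ max{n11,n12} + max{n21, n22−n12} + (n11−n21)⁺; R11+2R12+R21+R22 ≤ max{n11,n12} + max{n22, n21−n11} + (n12−n22)⁺; R11+R12+2R21+R22 ≤ max{n22,n21} + max{n11, n12−n22} + (n21−n11)⁺; R11+R12+R21+2R22 ≤ max{n22,n21} + max{n12, n11−n21} + (n22−n12)⁺. Then R11+R12+R21+R22 ≤ D(N).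 -/
set_option maxHeartbeats 4000000


/-- the arithmetic combination of the rate bounds of Lemma 3
proving the converse (upper) bound of Theorem 3 for the deterministic
X-channel: the sum rate is at most `D(N)`. -/
theorem stmt_12 (n11 n12 n21 n22 : ℕ) (hN : max n12 n21 ≤ min n11 n22)
    (R11 R12 R21 R22 : ℝ)
    (h1 : R11 + R12 + R22 ≤ max (n11 : ℝ) (n12 : ℝ) + max ((n22 : ℝ) - n12) 0)
    (h2 : R11 + R21 + R22 ≤ max (n21 : ℝ) (n22 : ℝ) + max ((n11 : ℝ) - n21) 0)
    (h3 : R11 + R12 + R21 ≤ max (n11 : ℝ) (n12 : ℝ) + max ((n21 : ℝ) - n11) 0)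
    (h4 : R12 + R21 + R22 ≤ max (n21 : ℝ) (n22 : ℝ) + max ((n12 : ℝ) - n22) 0)
    (h5 : R11 + R12 + R21 + R22 ≤
      max (n12 : ℝ) ((n11 : ℝ) - n21) + max (n21 : ℝ) ((n22 : ℝ) - n12))
    (h6 : R11 + R12 + R21 + R22 ≤
      max (n11 : ℝ) ((n12 : ℝ) - n22) + max (n22 : ℝ) ((n21 : ℝ) - n11))
    (h7 : 2 * R11 + R12 + R21 + R22 ≤
      max (n11 : ℝ) (n12 : ℝ) + max (n21 : ℝ) ((n22 : ℝ) - n12) + max ((n11 : ℝ) - n21) 0)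
    (h8 : R11 + 2 * R12 + R21 + R22 ≤
      max (n11 : ℝ) (n12 : ℝ) + max (n22 : ℝ) ((n21 : ℝ) - n11) + max ((n12 : ℝ) - n22) 0)
    (h9 : R11 + R12 + 2 * R21 + R22 ≤
      max (n22 : ℝ) (n21 : ℝ) + max (n11 : ℝ) ((n12 : ℝ) - n22) + max ((n21 : ℝ) - n11) 0)
    (h10 : R11 + R12 + R21 + 2 * R22 ≤
      max (n22 : ℝ) (n21 : ℝ) + max (n12 : ℝ) ((n11 : ℝ) - n21) + max ((n22 : ℝ) - n12) 0) :
    R11 + R12 + R21 + R22 ≤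
      min
        (min (max ((n12 : ℝ) + n21 - n11) 0 + max ((n12 : ℝ) + n21 - n22) 0)
          ((1 / 2) * ((n12 : ℝ) + n21 + max ((n12 : ℝ) + n21 - n22) 0)))
        (min ((1 / 2) * ((n12 : ℝ) + n21 + max ((n12 : ℝ) + n21 - n11) 0))
          ((2 / 3) * ((n12 : ℝ) + n21)))
      + ((n11 : ℝ) - n21) + ((n22 : ℝ) - n12) := by
  have hA1 : (n12 : ℝ) ≤ n11 := by
    exact_mod_cast (le_max_left n12 n21).trans (hN.trans (min_le_left _ _))
  have hA2 : (n21 : ℝ) ≤ n11 := by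
    exact_mod_cast (le_max_right n12 n21).trans (hN.trans (min_le_left _ _))
  have hB1 : (n12 : ℝ) ≤ n22 := by
    exact_mod_cast (le_max_left n12 n21).trans (hN.trans (min_le_right _ _))
  have hB2 : (n21 : ℝ) ≤ n22 := by
    exact_mod_cast (le_max_right n12 n21).trans (hN.trans (min_le_right _ _))
  have e1 : max (n11 : ℝ) (n12 : ℝ) = n11 := max_eq_left hA1
  have e2 : max (n21 : ℝ) (n22 : ℝ) = n22 := max_eq_right hB2
  have e3 : max (n22 : ℝ) (n21 : ℝ) = n22 := max_eq_left hB2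
  have e4 : max ((n22 : ℝ) - n12) 0 = (n22 : ℝ) - n12 := max_eq_left (by linarith)
  have e5 : max ((n11 : ℝ) - n21) 0 = (n11 : ℝ) - n21 := max_eq_left (by linarith)
  have e6 : max ((n21 : ℝ) - n11) 0 = 0 := max_eq_right (by linarith)
  have e7 : max ((n12 : ℝ) - n22) 0 = 0 := max_eq_right (by linarith)
  have e8 : max (n11 : ℝ) ((n12 : ℝ) - n22) = n11 := max_eq_left (by
    have : (0:ℝ) ≤ n11 := Nat.cast_nonneg _
    linarith)
  have e9 : max (n22 : ℝ) ((n21 : ℝ) - n11) = n22 := max_eq_left (by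
    have : (0:ℝ) ≤ n22 := Nat.cast_nonneg _
    linarith)
  rw [e1, e4] at h1; rw [e2, e5] at h2; rw [e1, e6] at h3; rw [e2, e7] at h4
  rw [e8, e9] at h6; rw [e1, e5] at h7; rw [e1, e9, e7] at h8; rw [e3, e8, e6] at h9
  rw [e3, e4] at h10
  have m1 : (n11 : ℝ) - n21 ≤ max (n12 : ℝ) ((n11 : ℝ) - n21) := le_max_right _ _
  have m2 : (n12 : ℝ) ≤ max (n12 : ℝ) ((n11 : ℝ) - n21) := le_max_left _ _
  have m3 : (n22 : ℝ) - n12 ≤ max (n21 : ℝ) ((n22 : ℝ) - n12) := le_max_right _ _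
  have m4 : (n21 : ℝ) ≤ max (n21 : ℝ) ((n22 : ℝ) - n12) := le_max_left _ _
  have m5 : (n12 : ℝ) + n21 - n11 ≤ max ((n12 : ℝ) + n21 - n11) (0 : ℝ) := le_max_left _ _
  have m6 : (0 : ℝ) ≤ max ((n12 : ℝ) + n21 - n11) (0 : ℝ) := le_max_right _ _
  have m7 : (n12 : ℝ) + n21 - n22 ≤ max ((n12 : ℝ) + n21 - n22) (0 : ℝ) := le_max_left _ _
  have m8 : (0 : ℝ) ≤ max ((n12 : ℝ) + n21 - n22) (0 : ℝ) := le_max_right _ _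
  rcases max_choice ((n12 : ℝ)) ((n11 : ℝ) - n21) with f1 | f1 <;>
  rcases max_choice ((n21 : ℝ)) ((n22 : ℝ) - n12) with f2 | f2 <;>
  rcases max_choice ((n12 : ℝ) + n21 - n11) (0 : ℝ) with g1 | g1 <;>
  rcases max_choice ((n12 : ℝ) + n21 - n22) (0 : ℝ) with g2 | g2 <;>
  · rw [f1, f2] at h5; rw [f2] at h7; rw [f1] at h10
    rw [f1] at m1 m2; rw [f2] at m3 m4; rw [g1] at m5 m6; rw [g2] at m7 m8
    rw [g1, g2]
    have t : R11 + R12 + R21 + R22 - ((n11 : ℝ) - n21) - ((n22 : ℝ) - n12) ≤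
        min
          (min (max ((n12 : ℝ) + n21 - n11) 0 + max ((n12 : ℝ) + n21 - n22) 0)
            ((1 / 2) * ((n12 : ℝ) + n21 + max ((n12 : ℝ) + n21 - n22) 0)))
          (min ((1 / 2) * ((n12 : ℝ) + n21 + max ((n12 : ℝ) + n21 - n11) 0))
            ((2 / 3) * ((n12 : ℝ) + n21))) := by
      rw [g1, g2]
      refine le_min (le_min ?_ ?_) (le_min ?_ ?_) <;>
        linarith [h1, h2, h3, h4, h5, h6, h7, h8, h9, h10, m1, m2, m3, m4, m5, m6, m7, m8]
    rw [g1, g2] at t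
    linarith [t]
end

section
/- Let n11, n12, n21, n22 be nonnegative integers with min{n11,n22} ≥ max{n12,n21}, let h11, h12, h21, h22 ∈ (1,2], and write S_mk = 2^{2n_mk}·h_mk² for m,k ∈ {1,2}. Let R11, R12, R21, R22 be real numbers satisfying: R11+R12+R22 ≤ (1/2)log(1+S11+S12) + (1/2)log(1+S22/(1+S12)); R11+R21+R22 ≤ (1/2)log(1+S22+S21) + (1/2)log(1+S11/(1+S21)); R11+R12+R21 ≤ (1/2)log(1+S11+S12) + (1/2)log(1+S21/(1+S11)); R12+R21+R22 ≤ (1/2)log(1+S22+S21) + (1/2)log(1+S12/(1+S22)); R11+R12+R21+R22 ≤ (1/2)log(1+S12+S11/(1+S21)) + (1/2)log(1+S21+S22/(1+S12)); R11+R12+R21+R22 ≤ (1/2)log(1+S11+S12/(1+S22)) + (1/2)log(1+S22+S21/(1+S11)); 2R11+R12+R21+R22 ≤ (1/2)log(1+S11+S12) + (1/2)log(1+S21+S22/(1+S12)) + (1/2)log(1+S11/(1+S21)); R11+2R12+R21+R22 ≤ (1/2)log(1+S12+S11) + (1/2)log(1+S22+S21/(1+S11)) + (1/2)log(1+S12/(1+S22));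 R11+R12+2R21+R22 ≤ (1/2)log(1+S21+S22) + (1/2)log(1+S11+S12/(1+S22)) + (1/2)log(1+S21/(1+S11)); R11+R12+R21+2R22 ≤ (1/2)log(1+S22+S21) + (1/2)log(1+S12+S11/(1+S21)) + (1/2)log(1+S22/(1+S12)). Then R11+R12+R21+R22 ≤ D(N) + 4. -/
open Real
set_option maxHeartbeats 2000000

private lemma hl_logb9 : Real.logb 2 9 ≤ 10/3 := by
  have h2 : (0:ℝ) < Real.log 2 := Real.log_pos one_lt_two
  have h729 : Real.log ((9:ℝ)^(3:ℕ)) ≤ Real.log ((2:ℝ)^(10:ℕ)) :=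
    Real.log_le_log (by norm_num) (by norm_num)
  simp only [Real.log_pow] at h729
  push_cast at h729
  rw [Real.logb, div_le_iff₀ h2]
  linarith

private lemma hl_logb5 : Real.logb 2 5 ≤ 8/3 := by
  have h2 : (0:ℝ) < Real.log 2 := Real.log_pos one_lt_two
  have h125 : Real.log ((5:ℝ)^(3:ℕ)) ≤ Real.log ((2:ℝ)^(8:ℕ)) :=
    Real.log_le_log (by norm_num) (by norm_num)
  simp only [Real.log_pow] at h125
  push_cast at h125
  rw [Real.logb, div_le_iff₀ h2]
  linarith

private lemma half_logb_le {X C k c : ℝ} (hX : 0 < X) (hC : 0 < C)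
    (hXC : X ≤ C * (2:ℝ) ^ k) (hc : Real.logb 2 C ≤ c) :
    (1/2) * Real.logb 2 X ≤ (k + c)/2 := by
  have hpow : (0:ℝ) < (2:ℝ) ^ k := Real.rpow_pos_of_pos two_pos k
  have h1 : Real.logb 2 X ≤ Real.logb 2 (C * (2:ℝ) ^ k) :=
    Real.logb_le_logb_of_le one_lt_two hX hXC
  rw [Real.logb_mul (ne_of_gt hC) (ne_of_gt hpow),
    Real.logb_rpow two_pos (by norm_num)] at h1
  linarith

private lemma r2n (n : ℕ) : (2:ℝ) ^ (2*(n:ℝ)) = (2:ℝ) ^ (2*n) := by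
  rw [show (2*(n:ℝ)) = ((2*n : ℕ) : ℝ) by push_cast; ring, Real.rpow_natCast]

private lemma r2sub (a b : ℕ) :
    (2:ℝ) ^ (2*((a:ℝ)-(b:ℝ))) = (2:ℝ) ^ (2*a) / (2:ℝ) ^ (2*b) := by
  rw [mul_sub, Real.rpow_sub two_pos, r2n, r2n]

/-- the arithmetic combination of the Gaussian rate bounds
(Section 6.2) proving the converse (upper) bound of Theorem 4 for the Gaussian
X-channel: the sum rate is at most `D(N) + 4`. Here `S_mk = 2^{2 n_mk} h_mk²`. -/
theorem stmt_13 (n11 n12 n21 n22 : ℕ) (hN : max n12 n21 ≤ min n11 n22)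
    (h11 h12 h21 h22 : ℝ)
    (hh11 : h11 ∈ Set.Ioc (1:ℝ) 2) (hh12 : h12 ∈ Set.Ioc (1:ℝ) 2)
    (hh21 : h21 ∈ Set.Ioc (1:ℝ) 2) (hh22 : h22 ∈ Set.Ioc (1:ℝ) 2)
    (S11 S12 S21 S22 : ℝ)
    (hS11 : S11 = 2 ^ (2 * n11) * h11 ^ 2) (hS12 : S12 = 2 ^ (2 * n12) * h12 ^ 2)
    (hS21 : S21 = 2 ^ (2 * n21) * h21 ^ 2) (hS22 : S22 = 2 ^ (2 * n22) * h22 ^ 2)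
    (R11 R12 R21 R22 : ℝ)
    (h1 : R11 + R12 + R22 ≤
      (1 / 2) * logb 2 (1 + S11 + S12) + (1 / 2) * logb 2 (1 + S22 / (1 + S12)))
    (h2 : R11 + R21 + R22 ≤
      (1 / 2) * logb 2 (1 + S22 + S21) + (1 / 2) * logb 2 (1 + S11 / (1 + S21)))
    (h3 : R11 + R12 + R21 ≤
      (1 / 2) * logb 2 (1 + S11 + S12) + (1 / 2) * logb 2 (1 + S21 / (1 + S11)))
    (h4 : R12 + R21 + R22 ≤
      (1 / 2) * logb 2 (1 + S22 + S21) + (1 / 2) * logb 2 (1 + S12 / (1 + S22)))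
    (h5 : R11 + R12 + R21 + R22 ≤
      (1 / 2) * logb 2 (1 + S12 + S11 / (1 + S21)) + (1 / 2) * logb 2 (1 + S21 + S22 / (1 + S12)))
    (h6 : R11 + R12 + R21 + R22 ≤
      (1 / 2) * logb 2 (1 + S11 + S12 / (1 + S22)) + (1 / 2) * logb 2 (1 + S22 + S21 / (1 + S11)))
    (h7 : 2 * R11 + R12 + R21 + R22 ≤
      (1 / 2) * logb 2 (1 + S11 + S12) + (1 / 2) * logb 2 (1 + S21 + S22 / (1 + S12))
        + (1 / 2) * logb 2 (1 + S11 / (1 + S21)))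
    (h8 : R11 + 2 * R12 + R21 + R22 ≤
      (1 / 2) * logb 2 (1 + S12 + S11) + (1 / 2) * logb 2 (1 + S22 + S21 / (1 + S11))
        + (1 / 2) * logb 2 (1 + S12 / (1 + S22)))
    (h9 : R11 + R12 + 2 * R21 + R22 ≤
      (1 / 2) * logb 2 (1 + S21 + S22) + (1 / 2) * logb 2 (1 + S11 + S12 / (1 + S22))
        + (1 / 2) * logb 2 (1 + S21 / (1 + S11)))
    (h10 : R11 + R12 + R21 + 2 * R22 ≤
      (1 / 2) * logb 2 (1 + S22 + S21) + (1 / 2) * logb 2 (1 + S12 + S11 / (1 + S21))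
        + (1 / 2) * logb 2 (1 + S22 / (1 + S12))) :
    R11 + R12 + R21 + R22 ≤
      min
        (min (max ((n12 : ℝ) + n21 - n11) 0 + max ((n12 : ℝ) + n21 - n22) 0)
          ((1 / 2) * ((n12 : ℝ) + n21 + max ((n12 : ℝ) + n21 - n22) 0)))
        (min ((1 / 2) * ((n12 : ℝ) + n21 + max ((n12 : ℝ) + n21 - n11) 0))
          ((2 / 3) * ((n12 : ℝ) + n21)))
      + ((n11 : ℝ) - n21) + ((n22 : ℝ) - n12) + 4 := by
  obtain ⟨hh11a, hh11b⟩ := hh11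
  obtain ⟨hh12a, hh12b⟩ := hh12
  obtain ⟨hh21a, hh21b⟩ := hh21
  obtain ⟨hh22a, hh22b⟩ := hh22
  -- nat order facts
  have hn12_11 : n12 ≤ n11 := le_trans (le_trans (le_max_left _ _) hN) (min_le_left _ _)
  have hn12_22 : n12 ≤ n22 := le_trans (le_trans (le_max_left _ _) hN) (min_le_right _ _)
  have hn21_11 : n21 ≤ n11 := le_trans (le_trans (le_max_right _ _) hN) (min_le_left _ _)
  have hn21_22 : n21 ≤ n22 := le_trans (le_trans (le_max_right _ _) hN) (min_le_right _ _)
  -- powers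
  have hp : ∀ n : ℕ, (1:ℝ) ≤ (2:ℝ) ^ (2*n) := fun n => one_le_pow₀ one_le_two
  have hpp : ∀ n : ℕ, (0:ℝ) < (2:ℝ) ^ (2*n) := fun n => by positivity
  have hmono : ∀ a b : ℕ, a ≤ b → (2:ℝ) ^ (2*a) ≤ (2:ℝ) ^ (2*b) :=
    fun a b h => pow_le_pow_right₀ one_le_two (by omega)
  -- S bounds
  have hSl11 : (2:ℝ) ^ (2*n11) ≤ S11 := by
    rw [hS11]; have h1sq : (1:ℝ) ≤ h11^2 := one_le_pow₀ (le_of_lt hh11a)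
    linarith [mul_le_mul_of_nonneg_left h1sq (le_of_lt (hpp n11))]
  have hSl12 : (2:ℝ) ^ (2*n12) ≤ S12 := by
    rw [hS12]; have h1sq : (1:ℝ) ≤ h12^2 := one_le_pow₀ (le_of_lt hh12a)
    linarith [mul_le_mul_of_nonneg_left h1sq (le_of_lt (hpp n12))]
  have hSl21 : (2:ℝ) ^ (2*n21) ≤ S21 := by
    rw [hS21]; have h1sq : (1:ℝ) ≤ h21^2 := one_le_pow₀ (le_of_lt hh21a)
    linarith [mul_le_mul_of_nonneg_left h1sq (le_of_lt (hpp n21))]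
  have hSl22 : (2:ℝ) ^ (2*n22) ≤ S22 := by
    rw [hS22]; have h1sq : (1:ℝ) ≤ h22^2 := one_le_pow₀ (le_of_lt hh22a)
    linarith [mul_le_mul_of_nonneg_left h1sq (le_of_lt (hpp n22))]
  have hSu11 : S11 ≤ 4 * (2:ℝ) ^ (2*n11) := by
    rw [hS11]; have h4sq : h11^2 ≤ 4 := by calc h11^2 ≤ 2^2 := pow_le_pow_left₀ (by linarith) hh11b 2
      _ = 4 := by norm_num
    linarith [mul_le_mul_of_nonneg_left h4sq (le_of_lt (hpp n11))]
  have hSu12 : S12 ≤ 4 * (2:ℝ) ^ (2*n12) := by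
    rw [hS12]; have h4sq : h12^2 ≤ 4 := by calc h12^2 ≤ 2^2 := pow_le_pow_left₀ (by linarith) hh12b 2
      _ = 4 := by norm_num
    linarith [mul_le_mul_of_nonneg_left h4sq (le_of_lt (hpp n12))]
  have hSu21 : S21 ≤ 4 * (2:ℝ) ^ (2*n21) := by
    rw [hS21]; have h4sq : h21^2 ≤ 4 := by calc h21^2 ≤ 2^2 := pow_le_pow_left₀ (by linarith) hh21b 2
      _ = 4 := by norm_num
    linarith [mul_le_mul_of_nonneg_left h4sq (le_of_lt (hpp n21))]
  have hSu22 : S22 ≤ 4 * (2:ℝ) ^ (2*n22) := by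
    rw [hS22]; have h4sq : h22^2 ≤ 4 := by calc h22^2 ≤ 2^2 := pow_le_pow_left₀ (by linarith) hh22b 2
      _ = 4 := by norm_num
    linarith [mul_le_mul_of_nonneg_left h4sq (le_of_lt (hpp n22))]
  have hS11p : 0 < S11 := lt_of_lt_of_le (hpp n11) hSl11
  have hS12p : 0 < S12 := lt_of_lt_of_le (hpp n12) hSl12
  have hS21p : 0 < S21 := lt_of_lt_of_le (hpp n21) hSl21
  have hS22p : 0 < S22 := lt_of_lt_of_le (hpp n22) hSl22
  have hd12 : (2:ℝ) ^ (2*n12) ≤ 1 + S12 := by linarith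
  have hd21 : (2:ℝ) ^ (2*n21) ≤ 1 + S21 := by linarith
  have hd11 : (2:ℝ) ^ (2*n11) ≤ 1 + S11 := by linarith
  have hd22 : (2:ℝ) ^ (2*n22) ≤ 1 + S22 := by linarith
  -- quotient bounds : S_a / (1+S_b) ≤ 4 * 2^(2a) / 2^(2b)
  have hq : ∀ (Sa Sb : ℝ) (a b : ℕ), 0 < Sa → Sa ≤ 4 * (2:ℝ)^(2*a) →
      (2:ℝ)^(2*b) ≤ 1 + Sb →
      Sa / (1 + Sb) ≤ 4 * (2:ℝ)^(2*a) / (2:ℝ)^(2*b) := by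
    intro Sa Sb a b hSa hSau hSbd
    exact div_le_div₀ (by positivity) hSau (hpp b) hSbd
  have q2212 := hq S22 S12 n22 n12 hS22p hSu22 hd12
  have q1121 := hq S11 S21 n11 n21 hS11p hSu11 hd21
  have q2111 := hq S21 S11 n21 n11 hS21p hSu21 hd11
  have q1222 := hq S12 S22 n12 n22 hS12p hSu12 hd22
  have hq0 : ∀ (Sa Sb : ℝ), 0 < Sa → 0 < Sb → 0 < Sa / (1 + Sb) := by
    intro Sa Sb ha hb; positivity
  -- A1 : half log(1+S11+S12) ≤ n11 + 5/3
  have A1 : (1/2) * logb 2 (1 + S11 + S12) ≤ (n11:ℝ) + 5/3 := by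
    have hb : 1 + S11 + S12 ≤ 9 * (2:ℝ) ^ (2*((n11:ℝ))) := by
      rw [r2n]; linarith [hp n11, hmono n12 n11 hn12_11, hSu11, hSu12]
    have := half_logb_le (X := 1 + S11 + S12) (by positivity) (by norm_num) hb hl_logb9
    linarith
  -- A3 : half log(1+S22+S21) ≤ n22 + 5/3
  have A3 : (1/2) * logb 2 (1 + S22 + S21) ≤ (n22:ℝ) + 5/3 := by
    have hb : 1 + S22 + S21 ≤ 9 * (2:ℝ) ^ (2*((n22:ℝ))) := by
      rw [r2n]; linarith [hp n22, hmono n21 n22 hn21_22, hSu22, hSu21]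
    have := half_logb_le (X := 1 + S22 + S21) (by positivity) (by norm_num) hb hl_logb9
    linarith
  -- A2 : half log(1+S22/(1+S12)) ≤ n22 - n12 + 4/3
  have A2 : (1/2) * logb 2 (1 + S22 / (1 + S12)) ≤ (n22:ℝ) - (n12:ℝ) + 4/3 := by
    have hb : 1 + S22 / (1 + S12) ≤ 5 * (2:ℝ) ^ (2*((n22:ℝ) - (n12:ℝ))) := by
      rw [r2sub]
      have h1 : (1:ℝ) ≤ (2:ℝ)^(2*n22) / (2:ℝ)^(2*n12) :=
        (one_le_div (hpp n12)).mpr (hmono n12 n22 hn12_22)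
      have h2 : 4 * (2:ℝ)^(2*n22) / (2:ℝ)^(2*n12)
          = 4 * ((2:ℝ)^(2*n22) / (2:ℝ)^(2*n12)) := by ring
      rw [h2] at q2212
      linarith
    have := half_logb_le (X := 1 + S22 / (1 + S12)) (by positivity) (by norm_num) hb hl_logb5
    linarith
  -- A4 : half log(1+S11/(1+S21)) ≤ n11 - n21 + 4/3
  have A4 : (1/2) * logb 2 (1 + S11 / (1 + S21)) ≤ (n11:ℝ) - (n21:ℝ) + 4/3 := by
    have hb : 1 + S11 / (1 + S21) ≤ 5 * (2:ℝ) ^ (2*((n11:ℝ) - (n21:ℝ))) := by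
      rw [r2sub]
      have h1 : (1:ℝ) ≤ (2:ℝ)^(2*n11) / (2:ℝ)^(2*n21) :=
        (one_le_div (hpp n21)).mpr (hmono n21 n11 hn21_11)
      have h2 : 4 * (2:ℝ)^(2*n11) / (2:ℝ)^(2*n21)
          = 4 * ((2:ℝ)^(2*n11) / (2:ℝ)^(2*n21)) := by ring
      rw [h2] at q1121
      linarith
    have := half_logb_le (X := 1 + S11 / (1 + S21)) (by positivity) (by norm_num) hb hl_logb5
    linarith
  -- A5 : half log(1+S21/(1+S11)) ≤ 4/3
  have A5 : (1/2) * logb 2 (1 + S21 / (1 + S11)) ≤ 4/3 := by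
    have hq4 : S21 / (1 + S11) ≤ 4 := by
      rw [div_le_iff₀ (by positivity)]
      linarith [hmono n21 n11 hn21_11, hSu21, hSl11]
    have hb : 1 + S21 / (1 + S11) ≤ 5 * (2:ℝ) ^ (0:ℝ) := by
      rw [Real.rpow_zero]; linarith
    have := half_logb_le (X := 1 + S21 / (1 + S11)) (by positivity) (by norm_num) hb hl_logb5
    linarith
  -- A6 : half log(1+S12/(1+S22)) ≤ 4/3
  have A6 : (1/2) * logb 2 (1 + S12 / (1 + S22)) ≤ 4/3 := by
    have hq4 : S12 / (1 + S22) ≤ 4 := by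
      rw [div_le_iff₀ (by positivity)]
      linarith [hmono n12 n22 hn12_22, hSu12, hSl22]
    have hb : 1 + S12 / (1 + S22) ≤ 5 * (2:ℝ) ^ (0:ℝ) := by
      rw [Real.rpow_zero]; linarith
    have := half_logb_le (X := 1 + S12 / (1 + S22)) (by positivity) (by norm_num) hb hl_logb5
    linarith
  -- A7 : half log(1+S12+S11/(1+S21)) ≤ max n12 (n11-n21) + 5/3
  have A7 : (1/2) * logb 2 (1 + S12 + S11 / (1 + S21))
      ≤ max ((n12:ℝ)) ((n11:ℝ) - (n21:ℝ)) + 5/3 := by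
    set k : ℝ := max ((n12:ℝ)) ((n11:ℝ) - (n21:ℝ)) with hk
    have hk0 : 0 ≤ k := le_trans (Nat.cast_nonneg n12) (le_max_left _ _)
    have e1 : (2:ℝ) ^ (2*(n12:ℝ)) ≤ (2:ℝ) ^ (2*k) :=
      Real.rpow_le_rpow_of_exponent_le one_le_two (by linarith [le_max_left ((n12:ℝ)) ((n11:ℝ)-(n21:ℝ))])
    have e2 : (2:ℝ) ^ (2*((n11:ℝ)-(n21:ℝ))) ≤ (2:ℝ) ^ (2*k) :=
      Real.rpow_le_rpow_of_exponent_le one_le_two (by linarith [le_max_right ((n12:ℝ)) ((n11:ℝ)-(n21:ℝ))])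
    have e0 : (1:ℝ) ≤ (2:ℝ) ^ (2*k) := by
      rw [show (1:ℝ) = (2:ℝ) ^ (0:ℝ) by rw [Real.rpow_zero]]
      exact Real.rpow_le_rpow_of_exponent_le one_le_two (by linarith)
    rw [r2n] at e1
    rw [r2sub] at e2
    have hb : 1 + S12 + S11 / (1 + S21) ≤ 9 * (2:ℝ) ^ (2*k) := by
      have h2 : 4 * (2:ℝ)^(2*n11) / (2:ℝ)^(2*n21)
          = 4 * ((2:ℝ)^(2*n11) / (2:ℝ)^(2*n21)) := by ring
      rw [h2] at q1121
      linarith [hSu12, e0, e1, e2, q1121]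
    have := half_logb_le (X := 1 + S12 + S11 / (1 + S21)) (by positivity) (by norm_num) hb hl_logb9
    linarith
  -- A8 : half log(1+S21+S22/(1+S12)) ≤ max n21 (n22-n12) + 5/3
  have A8 : (1/2) * logb 2 (1 + S21 + S22 / (1 + S12))
      ≤ max ((n21:ℝ)) ((n22:ℝ) - (n12:ℝ)) + 5/3 := by
    set k : ℝ := max ((n21:ℝ)) ((n22:ℝ) - (n12:ℝ)) with hk
    have hk0 : 0 ≤ k := le_trans (Nat.cast_nonneg n21) (le_max_left _ _)
    have e1 : (2:ℝ) ^ (2*(n21:ℝ)) ≤ (2:ℝ) ^ (2*k) :=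
      Real.rpow_le_rpow_of_exponent_le one_le_two (by linarith [le_max_left ((n21:ℝ)) ((n22:ℝ)-(n12:ℝ))])
    have e2 : (2:ℝ) ^ (2*((n22:ℝ)-(n12:ℝ))) ≤ (2:ℝ) ^ (2*k) :=
      Real.rpow_le_rpow_of_exponent_le one_le_two (by linarith [le_max_right ((n21:ℝ)) ((n22:ℝ)-(n12:ℝ))])
    have e0 : (1:ℝ) ≤ (2:ℝ) ^ (2*k) := by
      rw [show (1:ℝ) = (2:ℝ) ^ (0:ℝ) by rw [Real.rpow_zero]]
      exact Real.rpow_le_rpow_of_exponent_le one_le_two (by linarith)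
    rw [r2n] at e1
    rw [r2sub] at e2
    have hb : 1 + S21 + S22 / (1 + S12) ≤ 9 * (2:ℝ) ^ (2*k) := by
      have h2 : 4 * (2:ℝ)^(2*n22) / (2:ℝ)^(2*n12)
          = 4 * ((2:ℝ)^(2*n22) / (2:ℝ)^(2*n12)) := by ring
      rw [h2] at q2212
      linarith [hSu21, e0, e1, e2, q2212]
    have := half_logb_le (X := 1 + S21 + S22 / (1 + S12)) (by positivity) (by norm_num) hb hl_logb9
    linarith
  -- max identities
  have mx1 : max ((n12:ℝ)) ((n11:ℝ) - (n21:ℝ))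
      = max ((n12:ℝ) + (n21:ℝ) - (n11:ℝ)) 0 + ((n11:ℝ) - (n21:ℝ)) := by
    rcases le_total ((n12:ℝ) + (n21:ℝ)) ((n11:ℝ)) with h | h
    · rw [max_eq_right (by linarith), max_eq_right (by linarith)]; ring
    · rw [max_eq_left (by linarith), max_eq_left (by linarith)]; ring
  have mx2 : max ((n21:ℝ)) ((n22:ℝ) - (n12:ℝ))
      = max ((n12:ℝ) + (n21:ℝ) - (n22:ℝ)) 0 + ((n22:ℝ) - (n12:ℝ)) := by
    rcases le_total ((n12:ℝ) + (n21:ℝ)) ((n22:ℝ)) with h | h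
    · rw [max_eq_right (by linarith), max_eq_right (by linarith)]; ring
    · rw [max_eq_left (by linarith), max_eq_left (by linarith)]; ring
  -- the four bounds
  have hT1 : R11 + R12 + R21 + R22 ≤
      (max ((n12:ℝ) + n21 - n11) 0 + max ((n12:ℝ) + n21 - n22) 0)
        + ((n11:ℝ) - n21) + ((n22:ℝ) - n12) + 4 := by
    push_cast at mx1 mx2 ⊢
    linarith
  have hT2 : R11 + R12 + R21 + R22 ≤
      ((1/2) * ((n12:ℝ) + n21 + max ((n12:ℝ) + n21 - n22) 0))
        + ((n11:ℝ) - n21) + ((n22:ℝ) - n12) + 4 := by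
    push_cast at mx2 ⊢
    linarith
  have hT3 : R11 + R12 + R21 + R22 ≤
      ((1/2) * ((n12:ℝ) + n21 + max ((n12:ℝ) + n21 - n11) 0))
        + ((n11:ℝ) - n21) + ((n22:ℝ) - n12) + 4 := by
    push_cast at mx1 ⊢
    linarith
  have hT4 : R11 + R12 + R21 + R22 ≤
      ((2/3) * ((n12:ℝ) + n21))
        + ((n11:ℝ) - n21) + ((n22:ℝ) - n12) + 4 := by
    linarith
  have hmin : R11 + R12 + R21 + R22 - ((n11:ℝ) - n21) - ((n22:ℝ) - n12) - 4 ≤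
      min
        (min (max ((n12 : ℝ) + n21 - n11) 0 + max ((n12 : ℝ) + n21 - n22) 0)
          ((1 / 2) * ((n12 : ℝ) + n21 + max ((n12 : ℝ) + n21 - n22) 0)))
        (min ((1 / 2) * ((n12 : ℝ) + n21 + max ((n12 : ℝ) + n21 - n11) 0))
          ((2 / 3) * ((n12 : ℝ) + n21))) :=
    le_min (le_min (by linarith) (by linarith)) (le_min (by linarith) (by linarith))
  linarith [hmin]
end
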